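/- arXiv:1811.08601 — 9 statements merged into one kernel-verified Lean document; each statement's English description precedes it below -/
import Mathlib

section
/- If d ≥ 1 has a prime factor p with p ≡ 1 (mod m), then x^m - 1 divides the cyclic polynomial S_d(x) = Σ_{e|d} μ(e) x^{d/e} in ℤ[x]. -/
open Polynomial

/-- The `d`-th cyclic polynomial `S_d(x) = ∑_{e ∣ d} μ(e) x^(d/e)` over `ℤ`. -/
noncomputable def cyclicPoly (d : ℕ) : Polynomial ℤ :=
  ∑ e ∈ d.divisors, Polynomial.C (ArithmeticFunction.moebius e) * Polynomial.X ^ (d / e)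

private lemma aux_dvd_pow (m t s : ℕ) : (X ^ m - 1 : Polynomial ℤ) ∣ X ^ (t + m * s) - X ^ t := by
  have h : (X ^ (t + m * s) - X ^ t : Polynomial ℤ) = X ^ t * ((X ^ m) ^ s - 1 ^ s) := by
    rw [pow_add, pow_mul]; ring
  rw [h]
  exact Dvd.dvd.mul_left (sub_dvd_pow_sub_pow _ _ s) _

theorem sub_one_dvd_cyclicPoly_of_prime_factor (m d p : ℕ) (hm : 1 ≤ m) (hd : 1 ≤ d)
    (hp : p.Prime) (hpd : p ∣ d) (hcong : p ≡ 1 [MOD m]) :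
    (Polynomial.X ^ m - 1 : Polynomial ℤ) ∣ cyclicPoly d := by
  classical
  set f : ℕ → Polynomial ℤ := fun e =>
    Polynomial.C (ArithmeticFunction.moebius e) * Polynomial.X ^ (d / e) with hf
  have hd0 : d ≠ 0 := by omega
  obtain ⟨s, hs⟩ : m ∣ p - 1 := (Nat.modEq_iff_dvd' hp.one_lt.le).mp hcong.symm
  have hps : p = m * s + 1 := by have := hp.one_lt; omega
  set A := d.divisors.filter (fun e => ¬ p ∣ e) with hA
  set B := d.divisors.filter (fun e => p ∣ e) with hB
  have hsplit : cyclicPoly d = (∑ e ∈ A, f e) + ∑ e ∈ B, f e := by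
    rw [cyclicPoly, ← Finset.sum_filter_add_sum_filter_not d.divisors (fun e => ¬ p ∣ e)]
    simp [hA, hB, hf]
  have hinj : ∀ a ∈ A, ∀ b ∈ A, p * a = p * b → a = b := fun a _ b _ h =>
    Nat.eq_of_mul_eq_mul_left hp.pos h
  have hBsum : ∑ e ∈ B, f e = ∑ e ∈ A, f (p * e) := by
    rw [← Finset.sum_image hinj]
    symm
    apply Finset.sum_subset
    · intro x hx
      simp only [Finset.mem_image, hA, Finset.mem_filter, Nat.mem_divisors] at hx
      obtain ⟨a, ⟨⟨had, -⟩, hpa⟩, rfl⟩ := hx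
      have hcop : Nat.Coprime p a := (Nat.Prime.coprime_iff_not_dvd hp).mpr hpa
      simp only [hB, Finset.mem_filter, Nat.mem_divisors]
      exact ⟨⟨Nat.Coprime.mul_dvd_of_dvd_of_dvd hcop hpd had, hd0⟩, Dvd.intro a rfl⟩
    · intro x hxB hxim
      simp only [hB, Finset.mem_filter, Nat.mem_divisors] at hxB
      obtain ⟨⟨hxd, -⟩, hpx⟩ := hxB
      have hnsq : ¬ Squarefree x := by
        intro hsq
        apply hxim
        obtain ⟨y, rfl⟩ := hpx
        refine Finset.mem_image.mpr ⟨y, ?_, rfl⟩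
        simp only [hA, Finset.mem_filter, Nat.mem_divisors]
        refine ⟨⟨dvd_trans (Dvd.intro_left p rfl) hxd, hd0⟩, fun hpy => ?_⟩
        obtain ⟨z, rfl⟩ := hpy
        exact hp.one_lt.ne' (Nat.isUnit_iff.mp (hsq p ⟨z, by ring⟩))
      simp [hf, ArithmeticFunction.moebius_eq_zero_of_not_squarefree hnsq]
  rw [hsplit, hBsum, ← Finset.sum_add_distrib]
  apply Finset.dvd_sum
  intro e he
  simp only [hA, Finset.mem_filter, Nat.mem_divisors] at he
  obtain ⟨⟨hed, -⟩, hpe⟩ := he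
  have hcop : Nat.Coprime p e := (Nat.Prime.coprime_iff_not_dvd hp).mpr hpe
  have hpe_dvd : p * e ∣ d := Nat.Coprime.mul_dvd_of_dvd_of_dvd hcop hpd hed
  obtain ⟨t, ht⟩ := hpe_dvd
  have he0 : e ≠ 0 := by rintro rfl; simp at ht; omega
  have h1 : d / (p * e) = t := by rw [ht, Nat.mul_div_cancel_left _ (Nat.mul_pos hp.pos (Nat.pos_of_ne_zero he0))]
  have h2 : d / e = p * t := by
    rw [ht, show p * e * t = e * (p * t) by ring, Nat.mul_div_cancel_left _ (Nat.pos_of_ne_zero he0)]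
  have hmu : ArithmeticFunction.moebius (p * e) = - ArithmeticFunction.moebius e := by
    rw [ArithmeticFunction.isMultiplicative_moebius.map_mul_of_coprime hcop,
      ArithmeticFunction.moebius_apply_prime hp]
    ring
  have : f e + f (p * e) = Polynomial.C (ArithmeticFunction.moebius e) *
      (X ^ (t + m * (s * t)) - X ^ t) := by
    rw [hf]
    simp only [h1, h2, hmu, map_neg]
    rw [hps]
    ring_nf
  rw [this]
  exact Dvd.dvd.mul_left (aux_dvd_pow m t (s * t)) _
end

section
/- Let m, d ≥ 1 and let e ≥ 1. If x^m - 1 divides the cyclic polynomial S_d(x) in ℤ[x], then x^m - 1 divides S_{de}(x). -/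
open Polynomial

lemma dvd_compXpow (m p : ℕ) (P : Polynomial ℤ) (h : (X ^ m - 1 : Polynomial ℤ) ∣ P) :
    (X ^ m - 1 : Polynomial ℤ) ∣ P.comp (X ^ p) := by
  obtain ⟨Q, rfl⟩ := h
  rw [mul_comp, sub_comp, pow_comp, X_comp, one_comp]
  refine Dvd.dvd.mul_right ?_ _
  have := sub_dvd_pow_sub_pow (X ^ m : Polynomial ℤ) 1 p
  rw [one_pow] at this
  rwa [← pow_mul, mul_comm p m, pow_mul]

lemma cyclicPoly_comp (n p : ℕ) :
    (cyclicPoly n).comp (X ^ p) =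
      ∑ e ∈ n.divisors, C (ArithmeticFunction.moebius e) * X ^ (n / e * p) := by
  simp [cyclicPoly, pow_mul, pow_right_comm]

lemma sqfree_dvd_aux (p n e : ℕ) (hp : p.Prime) (hpn : p ∣ n) (he : Squarefree e)
    (hed : e ∣ n * p) : e ∣ n := by
  by_cases hpe : p ∣ e
  · obtain ⟨e', rfl⟩ := hpe
    have hpe' : ¬ p ∣ e' := by
      intro hd
      exact hp.one_lt.ne' (Nat.isUnit_iff.mp (he p ⟨e' / p, by
        rw [mul_assoc, Nat.mul_div_cancel' hd]⟩))
    have he' : e' ∣ n := by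
      have : p * e' ∣ p * n := by rwa [mul_comm n p] at hed
      exact (mul_dvd_mul_iff_left (a := p) hp.pos.ne').mp this
    exact Nat.Coprime.mul_dvd_of_dvd_of_dvd (hp.coprime_iff_not_dvd.mpr hpe') hpn he'
  · exact (Nat.Coprime.dvd_of_dvd_mul_right
      ((hp.coprime_iff_not_dvd.mpr hpe).symm) hed)

lemma cyclicPoly_mul_prime_dvd (n p : ℕ) (hp : p.Prime) (hpn : p ∣ n) (hn : n ≠ 0) :
    cyclicPoly (n * p) = (cyclicPoly n).comp (X ^ p) := by
  have hnp : n * p ≠ 0 := Nat.mul_ne_zero hn hp.pos.ne'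
  rw [cyclicPoly_comp, cyclicPoly]
  have hcong : (∑ e ∈ n.divisors, C (ArithmeticFunction.moebius e) * X ^ (n / e * p))
      = ∑ e ∈ n.divisors, C (ArithmeticFunction.moebius e) * X ^ (n * p / e) := by
    refine Finset.sum_congr rfl fun e hmem => ?_
    have he : e ∣ n := (Nat.mem_divisors.mp hmem).1
    rw [mul_comm n p, Nat.mul_div_assoc p he, mul_comm p (n / e)]
  rw [hcong]
  refine (Finset.sum_subset (Nat.divisors_subset_of_dvd hnp (dvd_mul_right n p)) ?_).symm
  intro e hmem hnot
  have he : e ∣ n * p := (Nat.mem_divisors.mp hmem).1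
  by_cases hsq : Squarefree e
  · exact absurd (Nat.mem_divisors.mpr ⟨sqfree_dvd_aux p n e hp hpn hsq he, hn⟩) hnot
  · simp [ArithmeticFunction.moebius_eq_zero_of_not_squarefree hsq]

lemma cyclicPoly_mul_prime_not_dvd (n p : ℕ) (hp : p.Prime) (hpn : ¬ p ∣ n) (hn : n ≠ 0) :
    cyclicPoly (n * p) = (cyclicPoly n).comp (X ^ p) - cyclicPoly n := by
  have hnp : n * p ≠ 0 := Nat.mul_ne_zero hn hp.pos.ne'
  have hunion : (n * p).divisors = n.divisors ∪ n.divisors.image (p * ·) := by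
    ext a
    simp only [Nat.mem_divisors, Finset.mem_union, Finset.mem_image]
    constructor
    · rintro ⟨ha, -⟩
      by_cases hpa : p ∣ a
      · obtain ⟨a', rfl⟩ := hpa
        right
        refine ⟨a', ⟨?_, hn⟩, rfl⟩
        have : p * a' ∣ p * n := by rwa [mul_comm n p] at ha
        exact (mul_dvd_mul_iff_left (a := p) hp.pos.ne').mp this
      · exact Or.inl ⟨Nat.Coprime.dvd_of_dvd_mul_right (hp.coprime_iff_not_dvd.mpr hpa).symm ha, hn⟩
    · rintro (⟨ha, -⟩ | ⟨a', ⟨ha', -⟩, rfl⟩)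
      · exact ⟨ha.mul_right p, hnp⟩
      · exact ⟨mul_comm n p ▸ mul_dvd_mul_left p ha', hnp⟩
  have hdisj : Disjoint n.divisors (n.divisors.image (p * ·)) := by
    rw [Finset.disjoint_left]
    rintro a ha hb
    obtain ⟨a', -, rfl⟩ := Finset.mem_image.mp hb
    exact hpn ((dvd_mul_right p a').trans (Nat.mem_divisors.mp ha).1)
  have hinj : ∀ x ∈ n.divisors, ∀ y ∈ n.divisors, p * x = p * y → x = y := by
    intro x _ y _ hxy
    exact Nat.eq_of_mul_eq_mul_left hp.pos hxy
  rw [cyclicPoly_comp, cyclicPoly, hunion, Finset.sum_union hdisj, Finset.sum_image hinj]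
  have e1 : ∀ e ∈ n.divisors,
      C (ArithmeticFunction.moebius e) * X ^ (n * p / e)
        = C (ArithmeticFunction.moebius e) * X ^ (n / e * p) := by
    intro e hmem
    have he : e ∣ n := (Nat.mem_divisors.mp hmem).1
    rw [mul_comm n p, Nat.mul_div_assoc p he, mul_comm p (n / e)]
  have e2 : ∀ e ∈ n.divisors,
      C (ArithmeticFunction.moebius (p * e)) * X ^ (n * p / (p * e))
        = -(C (ArithmeticFunction.moebius e) * X ^ (n / e)) := by
    intro e hmem
    have he : e ∣ n := (Nat.mem_divisors.mp hmem).1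
    have hpe : ¬ p ∣ e := fun hd => hpn (hd.trans he)
    have hco : Nat.Coprime p e := hp.coprime_iff_not_dvd.mpr hpe
    rw [ArithmeticFunction.IsMultiplicative.map_mul_of_coprime
      ArithmeticFunction.isMultiplicative_moebius hco,
      ArithmeticFunction.moebius_apply_prime hp,
      mul_comm n p, Nat.mul_div_mul_left _ _ hp.pos]
    rw [neg_one_mul, map_neg]
    ring
  rw [Finset.sum_congr rfl e1, Finset.sum_congr rfl e2, Finset.sum_neg_distrib,
    ← sub_eq_add_neg, cyclicPoly]

theorem pow_sub_one_dvd_cyclicPoly_scaling (m d e : ℕ) (hm : 1 ≤ m) (hd : 1 ≤ d)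
    (he : 1 ≤ e) (h : (Polynomial.X ^ m - 1 : Polynomial ℤ) ∣ cyclicPoly d) :
    (Polynomial.X ^ m - 1 : Polynomial ℤ) ∣ cyclicPoly (d * e) := by
  induction e using Nat.strong_induction_on with
  | _ e ih =>
    rcases eq_or_lt_of_le he with h1 | h1
    · simpa [← h1] using h
    · obtain ⟨p, hp, hpe⟩ := Nat.exists_prime_and_dvd (n := e) (by omega)
      obtain ⟨e', rfl⟩ := hpe
      have he' : 1 ≤ e' := Nat.pos_of_ne_zero (by rintro rfl; simp at h1)
      have hlt : e' < p * e' := by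
        have := hp.two_le
        nlinarith
      have ihh := ih e' hlt he'
      have hn : d * e' ≠ 0 := Nat.mul_ne_zero (by omega) (by omega)
      rw [show d * (p * e') = (d * e') * p by ring]
      by_cases hpd : p ∣ d * e'
      · rw [cyclicPoly_mul_prime_dvd _ p hp hpd hn]
        exact dvd_compXpow _ _ _ ihh
      · rw [cyclicPoly_mul_prime_not_dvd _ p hp hpd hn]
        exact dvd_sub (dvd_compXpow _ _ _ ihh) ihh
end

section
/- Let m, d ≥ 1 and let e ≥ 1 be odd. If x^m + 1 divides the cyclic polynomial S_d(x) in ℤ[x], then x^m + 1 divides S_{de}(x). -/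
open Polynomial

lemma cyclicPoly_comp_X_pow (d p : ℕ) :
    (cyclicPoly d).comp (Polynomial.X ^ p) =
      ∑ f ∈ d.divisors, Polynomial.C (ArithmeticFunction.moebius f) *
        Polynomial.X ^ (d / f * p) := by
  unfold cyclicPoly
  rw [← Polynomial.coe_compRingHom_apply, map_sum]
  refine Finset.sum_congr rfl fun f _ => ?_
  simp [Polynomial.coe_compRingHom_apply, Polynomial.mul_comp, Polynomial.pow_comp, ← pow_mul,
    mul_comm]

lemma dvd_comp_X_pow {a b : Polynomial ℤ} (p : ℕ) (h : a ∣ b) :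
    a.comp (Polynomial.X ^ p) ∣ b.comp (Polynomial.X ^ p) := by
  obtain ⟨c, rfl⟩ := h
  exact ⟨c.comp (Polynomial.X ^ p), Polynomial.mul_comp a c _⟩

lemma key_step (m d p : ℕ) (hd : 1 ≤ d) (hp : p.Prime) (hp2 : p ≠ 2)
    (h : (Polynomial.X ^ m + 1 : Polynomial ℤ) ∣ cyclicPoly d) :
    (Polynomial.X ^ m + 1 : Polynomial ℤ) ∣ cyclicPoly (d * p) := by
  have hd0 : d ≠ 0 := by omega
  have hoddp : Odd p := hp.odd_of_ne_two hp2
  have hcomp : (Polynomial.X ^ m + 1 : Polynomial ℤ) ∣ (cyclicPoly d).comp (Polynomial.X ^ p) := by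
    have h1 : ((Polynomial.X ^ m + 1 : Polynomial ℤ)).comp (Polynomial.X ^ p) ∣
        (cyclicPoly d).comp (Polynomial.X ^ p) := dvd_comp_X_pow p h
    have h2 : ((Polynomial.X ^ m + 1 : Polynomial ℤ)).comp (Polynomial.X ^ p)
        = (Polynomial.X ^ m : Polynomial ℤ) ^ p + 1 ^ p := by
      simp [Polynomial.add_comp, Polynomial.pow_comp, ← pow_mul, mul_comm]
    rw [h2] at h1
    exact dvd_trans (hoddp.add_dvd_pow_add_pow _ _) h1
  by_cases hpd : p ∣ d
  · have heq : cyclicPoly (d * p) = (cyclicPoly d).comp (Polynomial.X ^ p) := by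
      rw [cyclicPoly_comp_X_pow]
      unfold cyclicPoly
      rw [← Finset.sum_subset (Nat.divisors_subset_of_dvd (Nat.mul_ne_zero hd0 hp.ne_zero) ⟨p, rfl⟩)]
      · refine Finset.sum_congr rfl fun f hf => ?_
        have hfd : f ∣ d := (Nat.mem_divisors.mp hf).1
        rw [show d * p / f = d / f * p by rw [mul_comm d p, Nat.mul_div_assoc p hfd, mul_comm]]
      · intro f hf hnf
        have hfdp : f ∣ d * p := (Nat.mem_divisors.mp hf).1
        have hmu : ArithmeticFunction.moebius f = 0 := by
          by_contra hne
          have hsq : Squarefree f := ArithmeticFunction.moebius_ne_zero_iff_squarefree.mp hne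
          have hfd2 : f ∣ d ^ 2 := hfdp.trans (by
            obtain ⟨k, rfl⟩ := hpd
            exact ⟨k, by ring⟩)
          have : f ∣ d := (hsq.dvd_pow_iff_dvd (by norm_num)).mp hfd2
          exact hnf (Nat.mem_divisors.mpr ⟨this, hd0⟩)
        simp [hmu]
    rw [heq]; exact hcomp
  · have hcop : Nat.Coprime p d := (Nat.Prime.coprime_iff_not_dvd hp).mpr hpd
    have hdisj : Disjoint d.divisors (d.divisors.image (p * ·)) := by
      rw [Finset.disjoint_right]
      intro f hfim hfd
      obtain ⟨g, hg, rfl⟩ := Finset.mem_image.mp hfim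
      exact hpd (dvd_trans (Dvd.intro g rfl) (Nat.mem_divisors.mp hfd).1)
    have hunion : (d * p).divisors = d.divisors ∪ d.divisors.image (p * ·) := by
      ext f
      simp only [Nat.mem_divisors, Finset.mem_union, Finset.mem_image]
      constructor
      · rintro ⟨hfdvd, -⟩
        by_cases hpf : p ∣ f
        · obtain ⟨g, rfl⟩ := hpf
          right
          refine ⟨g, ⟨⟨?_, hd0⟩, rfl⟩⟩
          have h' : g * p ∣ d * p := by rwa [mul_comm p g] at hfdvd
          exact (Nat.mul_dvd_mul_iff_right hp.pos).mp h'
        · left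
          refine ⟨?_, hd0⟩
          have hcopf : Nat.Coprime f p := ((Nat.Prime.coprime_iff_not_dvd hp).mpr hpf).symm
          exact hcopf.dvd_of_dvd_mul_right hfdvd
      · rintro (⟨hfdvd, -⟩ | ⟨g, ⟨⟨hgdvd, -⟩, rfl⟩⟩)
        · exact ⟨hfdvd.mul_right p, Nat.mul_ne_zero hd0 hp.ne_zero⟩
        · refine ⟨?_, Nat.mul_ne_zero hd0 hp.ne_zero⟩
          have h' := mul_dvd_mul_left p hgdvd
          rwa [mul_comm p d] at h'
    have heq : cyclicPoly (d * p)
        = (cyclicPoly d).comp (Polynomial.X ^ p) - cyclicPoly d := by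
      rw [cyclicPoly_comp_X_pow]
      unfold cyclicPoly
      rw [hunion, Finset.sum_union hdisj]
      have himg : ∑ f ∈ d.divisors.image (p * ·),
          Polynomial.C (ArithmeticFunction.moebius f) * Polynomial.X ^ (d * p / f)
          = -∑ f ∈ d.divisors, Polynomial.C (ArithmeticFunction.moebius f) *
              Polynomial.X ^ (d / f) := by
        rw [Finset.sum_image (fun a _ b _ hab => Nat.eq_of_mul_eq_mul_left hp.pos hab),
          ← Finset.sum_neg_distrib]
        refine Finset.sum_congr rfl fun f hf => ?_
        have hfd : f ∣ d := (Nat.mem_divisors.mp hf).1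
        have hcopf : Nat.Coprime p f := Nat.Coprime.coprime_dvd_right hfd hcop
        have hmu : ArithmeticFunction.moebius (p * f)
            = ArithmeticFunction.moebius p * ArithmeticFunction.moebius f :=
          ArithmeticFunction.isMultiplicative_moebius.map_mul_of_coprime hcopf
        have hdiv : d * p / (p * f) = d / f := by
          rw [mul_comm d p, Nat.mul_div_mul_left _ _ hp.pos]
        rw [hmu, ArithmeticFunction.moebius_apply_prime hp, hdiv, neg_one_mul, map_neg]
        ring
      have hfirst : ∑ f ∈ d.divisors,
          Polynomial.C (ArithmeticFunction.moebius f) * Polynomial.X ^ (d * p / f)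
          = ∑ f ∈ d.divisors, Polynomial.C (ArithmeticFunction.moebius f) *
              Polynomial.X ^ (d / f * p) := by
        refine Finset.sum_congr rfl fun f hf => ?_
        have hfd : f ∣ d := (Nat.mem_divisors.mp hf).1
        rw [show d * p / f = d / f * p by rw [mul_comm d p, Nat.mul_div_assoc p hfd, mul_comm]]
      rw [himg, hfirst]
      ring
    rw [heq]
    exact dvd_sub hcomp h

lemma aux_step (m : ℕ) : ∀ e : ℕ, Odd e → ∀ d : ℕ, 1 ≤ d →
    (Polynomial.X ^ m + 1 : Polynomial ℤ) ∣ cyclicPoly d →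
    (Polynomial.X ^ m + 1 : Polynomial ℤ) ∣ cyclicPoly (d * e) := by
  intro e
  induction e using Nat.strong_induction_on with
  | _ e ih =>
    intro hodd d hd h
    rcases eq_or_ne e 1 with rfl | hne
    · simpa using h
    · obtain ⟨p, hp, e', rfl⟩ := Nat.exists_prime_and_dvd hne
      have hp2 : p ≠ 2 := by
        rintro rfl
        exact (Nat.not_even_iff_odd.mpr hodd) ⟨e', by ring⟩
      have hodde' : Odd e' := by
        rcases Nat.even_or_odd e' with hev | hod
        · exact absurd (hev.mul_left p) (Nat.not_even_iff_odd.mpr hodd)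
        · exact hod
      have he'pos : 1 ≤ e' := hodde'.pos
      have he'lt : e' < p * e' := by
        have h1 : 1 < p := hp.one_lt
        calc e' = 1 * e' := (one_mul e').symm
          _ < p * e' := (Nat.mul_lt_mul_right he'pos).mpr h1
      have hih := ih e' he'lt hodde' d hd h
      have := key_step m (d * e') p (Nat.one_le_iff_ne_zero.mpr (Nat.mul_ne_zero (by omega) (by omega))) hp hp2 hih
      rwa [mul_assoc, mul_comm e' p] at this

theorem pow_add_one_dvd_cyclicPoly_scaling_odd (m d e : ℕ) (hm : 1 ≤ m) (hd : 1 ≤ d)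
    (he : 1 ≤ e) (hodd : Odd e)
    (h : (Polynomial.X ^ m + 1 : Polynomial ℤ) ∣ cyclicPoly d) :
    (Polynomial.X ^ m + 1 : Polynomial ℤ) ∣ cyclicPoly (d * e) := by
  exact aux_step m e hodd d hd h
end

section
/- If m ≥ 1 and d ≥ 1 are integers such that x^m - 1 divides the cyclic polynomial S_d(x) = Σ_{e|d} μ(e) x^{d/e} in ℤ[x], then m divides φ(d), where φ is Euler's totient function. -/
open Polynomial

theorem dvd_totient_of_pow_sub_one_dvd_cyclicPoly (m d : ℕ) (hm : 1 ≤ m) (hd : 1 ≤ d)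
    (h : (Polynomial.X ^ m - 1 : Polynomial ℤ) ∣ cyclicPoly d) :
    m ∣ Nat.totient d := by
  -- key: φ(d) = eval 1 (derivative (cyclicPoly d))
  have htot : ((Nat.totient d : ℤ)) = (derivative (cyclicPoly d)).eval 1 := by
    have hinv := (ArithmeticFunction.sum_eq_iff_sum_mul_moebius_eq
      (R := ℤ) (f := fun n => (Nat.totient n : ℤ)) (g := fun n => (n : ℤ))).mp
      (fun n hn => by exact_mod_cast Nat.sum_totient n) d hd
    rw [← Nat.map_div_right_divisors, Finset.sum_map] at hinv
    rw [← hinv]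
    simp only [cyclicPoly, derivative_sum, derivative_C_mul, derivative_X_pow, eval_finset_sum,
      eval_mul, eval_C, eval_pow, eval_X, eval_natCast, one_pow, mul_one]
    exact Finset.sum_congr rfl fun e he => by norm_cast
  obtain ⟨g, hg⟩ := h
  have hder : (derivative (cyclicPoly d)).eval 1 = (m : ℤ) * g.eval 1 := by
    rw [hg, derivative_mul, derivative_sub, derivative_X_pow, derivative_one, sub_zero]
    simp [eval_mul, eval_add, sub_self]
  have : (m : ℤ) ∣ (Nat.totient d : ℤ) := ⟨g.eval 1, by rw [htot, hder]⟩
  exact_mod_cast this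
end

section
/- Suppose d and e are positive integers that are primewise congruent modulo m, i.e., d = p_1^{a_1}···p_k^{a_k} and e = q_1^{a_1}···q_k^{a_k} with the p_i distinct primes, the q_i distinct primes, and p_i ≡ q_i (mod m) for each i. Then S_d(x) ≡ S_e(x) (mod x^m - 1) in ℤ[x], where S_d(x) = Σ_{c|d} μ(c) x^{d/c}. -/
open Polynomial

/-- Value of Möbius at a prime power, as a function of the exponent. -/
private def mw (b : ℕ) : ℤ := if b = 0 then 1 else if b = 1 then -1 else 0

private lemma moebius_pp {p : ℕ} (hp : p.Prime) (b : ℕ) :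
    ArithmeticFunction.moebius (p ^ b) = mw b := by
  rcases b with _ | b
  · simp [mw]
  · rw [ArithmeticFunction.moebius_apply_prime_pow hp (Nat.succ_ne_zero b)]
    rcases b with _ | b <;> simp [mw]

private lemma xpow_sub_dvd {m A B : ℕ} (h : A ≡ B [MOD m]) :
    (X ^ m - 1 : Polynomial ℤ) ∣ X ^ A - X ^ B := by
  wlog hAB : B ≤ A generalizing A B
  · have := this h.symm (le_of_not_ge hAB)
    rw [show (X ^ A - X ^ B : Polynomial ℤ) = -(X ^ B - X ^ A) by ring]
    exact dvd_neg.mpr this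
  obtain ⟨t, ht⟩ := (Nat.modEq_iff_dvd' hAB).mp h.symm
  have hA : A = B + m * t := by omega
  have : (X ^ m - 1 : Polynomial ℤ) ∣ (X ^ m) ^ t - 1 := by
    simpa using sub_dvd_pow_sub_pow (X ^ m : Polynomial ℤ) 1 t
  calc (X ^ m - 1 : Polynomial ℤ) ∣ X ^ B * ((X ^ m) ^ t - 1) := this.mul_left _
    _ = X ^ A - X ^ B := by rw [hA]; ring

private lemma fact_prod {k : ℕ} {p : Fin k → ℕ} (hp : ∀ i, (p i).Prime)
    (hpinj : Function.Injective p) (b : Fin k → ℕ) (j : Fin k) :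
    (∏ i, p i ^ b i).factorization (p j) = b j := by
  rw [Nat.factorization_prod (fun i _ => pow_ne_zero _ (hp i).pos.ne')]
  rw [Finsupp.finset_sum_apply]
  have : ∀ i : Fin k, (p i ^ b i).factorization (p j)
      = if i = j then b i else 0 := by
    intro i
    rw [(hp i).factorization_pow, Finsupp.single_apply]
    simp [hpinj.eq_iff]
  simp only [this, Finset.sum_ite_eq', Finset.mem_univ, if_true]

private lemma divisor_repr {k : ℕ} {p a : Fin k → ℕ} (hp : ∀ i, (p i).Prime)
    (hpinj : Function.Injective p) {c : ℕ} (hc0 : c ≠ 0) (hcd : c ∣ ∏ i, p i ^ a i) :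
    c = ∏ i, p i ^ c.factorization (p i) := by
  classical
  have hsub : c.primeFactors ⊆ Finset.image p Finset.univ := by
    intro x hx
    have hxp : x.Prime := Nat.prime_of_mem_primeFactors hx
    have hxc : x ∣ c := Nat.dvd_of_mem_primeFactors hx
    obtain ⟨i, -, hi⟩ := hxp.prime.exists_mem_finset_dvd (hxc.trans hcd)
    have : x = p i := by
      rw [← Nat.prime_dvd_prime_iff_eq hxp (hp i)]
      exact hxp.dvd_of_dvd_pow hi
    simp [this]
  conv_lhs => rw [← Nat.factorization_prod_pow_eq_self hc0]
  rw [Finsupp.prod]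
  rw [Finset.prod_subset (Nat.support_factorization c ▸ hsub)
    (fun x _ hx => by simp [Finsupp.notMem_support_iff.mp hx])]
  rw [Finset.prod_image (fun i _ j _ h => hpinj h)]

private lemma cyclicPoly_eq_sum_pi {k : ℕ} (p a : Fin k → ℕ) (hp : ∀ i, (p i).Prime)
    (hpinj : Function.Injective p) :
    cyclicPoly (∏ i, p i ^ a i) =
      ∑ b ∈ Fintype.piFinset (fun i => Finset.range (a i + 1)),
        Polynomial.C (∏ i, mw (b i)) * Polynomial.X ^ (∏ i, p i ^ (a i - b i)) := by
  classical
  have hd0 : (∏ i, p i ^ a i) ≠ 0 :=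
    Finset.prod_ne_zero_iff.mpr fun i _ => pow_ne_zero _ (hp i).pos.ne'
  unfold cyclicPoly
  refine Finset.sum_nbij' (fun c => fun i => c.factorization (p i))
    (fun b => ∏ i, p i ^ b i) ?_ ?_ ?_ ?_ ?_
  · intro c hc
    rw [Nat.mem_divisors] at hc
    have hc0 : c ≠ 0 := fun h => hd0 (by simpa [h] using hc.1)
    have hle := (Nat.factorization_le_iff_dvd hc0 hd0).mpr hc.1
    simp only [Fintype.mem_piFinset, Finset.mem_range, Nat.lt_succ_iff]
    intro i
    have := hle (p i)
    rwa [fact_prod hp hpinj a i] at this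
  · intro b hb
    simp only [Fintype.mem_piFinset, Finset.mem_range, Nat.lt_succ_iff] at hb
    rw [Nat.mem_divisors]
    exact ⟨Finset.prod_dvd_prod_of_dvd _ _ (fun i _ => pow_dvd_pow _ (hb i)), hd0⟩
  · intro c hc
    rw [Nat.mem_divisors] at hc
    have hc0 : c ≠ 0 := fun h => hd0 (by simpa [h] using hc.1)
    exact (divisor_repr hp hpinj hc0 hc.1).symm
  · intro b hb
    funext j
    exact fact_prod hp hpinj b j
  · intro c hc
    rw [Nat.mem_divisors] at hc
    have hc0 : c ≠ 0 := fun h => hd0 (by simpa [h] using hc.1)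
    have hle : ∀ i, c.factorization (p i) ≤ a i := by
      intro i
      have := (Nat.factorization_le_iff_dvd hc0 hd0).mpr hc.1 (p i)
      rwa [fact_prod hp hpinj a i] at this
    have hrepr := divisor_repr hp hpinj hc0 hc.1
    have hdiv : (∏ i, p i ^ a i) / c = ∏ i, p i ^ (a i - c.factorization (p i)) := by
      have hmul : (∏ i, p i ^ (a i - c.factorization (p i))) *
          (∏ i, p i ^ (c.factorization (p i))) = ∏ i, p i ^ a i := by
        rw [← Finset.prod_mul_distrib]
        exact Finset.prod_congr rfl fun i _ => by
          rw [← pow_add, Nat.sub_add_cancel (hle i)]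
      refine Nat.div_eq_of_eq_mul_left (Nat.pos_of_ne_zero hc0) ?_
      rw [← hmul, ← hrepr]
    beta_reduce
    rw [hdiv]
    congr 1
    rw [congrArg (ArithmeticFunction.moebius ·) hrepr]
    rw [ArithmeticFunction.IsMultiplicative.map_prod _
      ArithmeticFunction.isMultiplicative_moebius _ ?_]
    · exact congrArg _ (Finset.prod_congr rfl fun i _ => moebius_pp (hp i) _)
    · intro i _ j _ hij
      exact Nat.Coprime.pow _ _ ((Nat.coprime_primes (hp i) (hp j)).mpr (hpinj.ne hij))

theorem cyclicPoly_congr_of_primewise_congruent (m d e : ℕ) (hm : 1 ≤ m)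
    (k : ℕ) (p q : Fin k → ℕ) (a : Fin k → ℕ)
    (hp : ∀ i, (p i).Prime) (hq : ∀ i, (q i).Prime)
    (hpinj : Function.Injective p) (hqinj : Function.Injective q)
    (ha : ∀ i, 1 ≤ a i)
    (hd : d = ∏ i, p i ^ a i) (he : e = ∏ i, q i ^ a i)
    (hcong : ∀ i, p i ≡ q i [MOD m]) :
    (Polynomial.X ^ m - 1 : Polynomial ℤ) ∣ (cyclicPoly d - cyclicPoly e) := by
  subst hd he
  rw [cyclicPoly_eq_sum_pi p a hp hpinj, cyclicPoly_eq_sum_pi q a hq hqinj,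
    ← Finset.sum_sub_distrib]
  refine Finset.dvd_sum fun b _ => ?_
  rw [← mul_sub]
  refine Dvd.dvd.mul_left ?_ _
  refine xpow_sub_dvd ?_
  rw [← ZMod.natCast_eq_natCast_iff]
  push_cast
  exact Finset.prod_congr rfl fun i _ => by
    rw [(ZMod.natCast_eq_natCast_iff _ _ _).mpr (hcong i)]
end

section
/- For every m ≥ 1 and every primitive m-th root of unity ζ_m, the field trace from ℚ(ζ_m) to ℚ of M_d(ζ_m) equals μ(m/d) if d divides m, and 0 otherwise, where M_d is the d-th necklace polynomial. -/
open Polynomial Finset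

lemma moebius_sum {R : Type*} [Ring R] (n : ℕ) :
    ∑ f ∈ n.divisors, ((ArithmeticFunction.moebius f : ℤ) : R) = if n = 1 then 1 else 0 := by
  have h := congrArg (fun g : ArithmeticFunction ℤ => g n)
    ArithmeticFunction.moebius_mul_coe_zeta
  simp only [ArithmeticFunction.coe_mul_zeta_apply, ArithmeticFunction.one_apply] at h
  rw [← Int.cast_sum, h]
  split <;> simp

lemma geom_aux {L : Type*} [Field L] {n : ℕ} (hn : 0 < n) {ξ : L}
    (hξ : IsPrimitiveRoot ξ n) (k : ℕ) :
    ∑ i ∈ Finset.range n, ξ ^ (i * k) = if n ∣ k then (n : L) else 0 := by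
  have h : ∀ i, ξ ^ (i * k) = (ξ ^ k) ^ i := fun i => by rw [← pow_mul, mul_comm]
  simp_rw [h]
  by_cases hdvd : n ∣ k
  · simp [(hξ.pow_eq_one_iff_dvd k).2 hdvd, hdvd]
  · rw [if_neg hdvd]
    have h1 : ξ ^ k ≠ 1 := fun h => hdvd ((hξ.pow_eq_one_iff_dvd k).1 h)
    have h2 : (ξ ^ k) ^ n = 1 := by
      rw [← pow_mul, mul_comm, pow_mul, hξ.pow_eq_one, one_pow]
    have h3 := geom_sum_mul (ξ ^ k) n
    rw [h2, sub_self] at h3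
    rcases mul_eq_zero.1 h3 with h | h
    · exact h
    · exact absurd (sub_eq_zero.1 h) h1


lemma trace_zeta_pow (m : ℕ+) (ζ : CyclotomicField m ℚ) (hζ : IsPrimitiveRoot ζ (m : ℕ)) (k : ℕ) :
    Algebra.trace ℚ (CyclotomicField m ℚ) (ζ ^ k) =
      ∑ f ∈ (m : ℕ).divisors, ((ArithmeticFunction.moebius f : ℤ) : ℚ) *
        (if ((m : ℕ) / f) ∣ k then (((m : ℕ) / f : ℕ) : ℚ) else 0) := by
  haveI : NeZero ((m : ℕ)) := ⟨m.pos.ne'⟩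
  haveI : IsCyclotomicExtension {(m : ℕ)} ℚ (CyclotomicField m ℚ) :=
    CyclotomicField.isCyclotomicExtension _ _
  haveI : IsGalois ℚ (CyclotomicField m ℚ) := IsCyclotomicExtension.isGalois {(m : ℕ)} ℚ _
  haveI : FiniteDimensional ℚ (CyclotomicField m ℚ) :=
    IsCyclotomicExtension.finiteDimensional {(m : ℕ)} ℚ _
  apply (algebraMap ℚ (CyclotomicField m ℚ)).injective
  rw [trace_eq_sum_automorphisms]
  have e1 : ∑ σ : CyclotomicField m ℚ ≃ₐ[ℚ] CyclotomicField m ℚ, σ (ζ ^ k) =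
      ∑ u : (ZMod (m : ℕ))ˣ, ζ ^ ((u : ZMod (m : ℕ)).val * k) := by
    refine Fintype.sum_bijective (hζ.autToPow ℚ) ?_ _ _ (fun σ => ?_)
    · refine (Fintype.bijective_iff_injective_and_card _).2 ⟨hζ.autToPow_injective ℚ, ?_⟩
      rw [← Nat.card_eq_fintype_card, IsGalois.card_aut_eq_finrank,
        IsCyclotomicExtension.finrank (CyclotomicField m ℚ)
          (Polynomial.cyclotomic.irreducible_rat m.pos),
        ZMod.card_units_eq_totient]
    · rw [map_pow, ← hζ.autToPow_spec ℚ σ, ← pow_mul]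
  rw [e1]
  have e2 : ∑ u : (ZMod (m : ℕ))ˣ, ζ ^ ((u : ZMod (m : ℕ)).val * k) =
      ∑ j ∈ (Finset.range (m : ℕ)).filter (fun j => Nat.Coprime j (m : ℕ)), ζ ^ (j * k) := by
    refine Finset.sum_bij' (fun u _ => (u : ZMod (m : ℕ)).val)
      (fun j hj => ZMod.unitOfCoprime j (Finset.mem_filter.1 hj).2) ?_ ?_ ?_ ?_ ?_
    · intro u _
      exact Finset.mem_filter.2 ⟨Finset.mem_range.2 (ZMod.val_lt _),
        ZMod.val_coe_unit_coprime u⟩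
    · intro j hj; exact Finset.mem_univ _
    · intro u _
      ext
      simp [ZMod.coe_unitOfCoprime, ZMod.natCast_val, ZMod.cast_id]
    · intro j hj
      simp [ZMod.coe_unitOfCoprime, ZMod.val_natCast,
        Nat.mod_eq_of_lt (Finset.mem_range.1 (Finset.mem_filter.1 hj).1)]
    · intro u _; rfl
  rw [e2, Finset.sum_filter]
  have e3 : ∀ j ∈ Finset.range (m : ℕ),
      (if Nat.Coprime j (m : ℕ) then ζ ^ (j * k) else 0) =
      ∑ f ∈ (Nat.gcd j (m : ℕ)).divisors,
        ((ArithmeticFunction.moebius f : ℤ) : CyclotomicField m ℚ) * ζ ^ (j * k) := by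
    intro j _
    rw [← Finset.sum_mul, moebius_sum]
    by_cases h : Nat.Coprime j (m : ℕ)
    · rw [if_pos h, if_pos h, one_mul]
    · rw [if_neg h, if_neg h, zero_mul]
  rw [Finset.sum_congr rfl e3]
  have e4 : ∀ j ∈ Finset.range (m : ℕ),
      ∑ f ∈ (Nat.gcd j (m : ℕ)).divisors,
        ((ArithmeticFunction.moebius f : ℤ) : CyclotomicField m ℚ) * ζ ^ (j * k) =
      ∑ f ∈ (m : ℕ).divisors,
        (if f ∣ j then ((ArithmeticFunction.moebius f : ℤ) : CyclotomicField m ℚ) * ζ ^ (j * k)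
          else 0) := by
    intro j _
    rw [← Finset.sum_filter]
    congr 1
    ext f
    simp only [Nat.mem_divisors, Finset.mem_filter, Nat.dvd_gcd_iff]
    constructor
    · rintro ⟨⟨h1, h2⟩, h3⟩
      exact ⟨⟨h2, m.pos.ne'⟩, h1⟩
    · rintro ⟨⟨h1, h2⟩, h3⟩
      exact ⟨⟨h3, h1⟩, fun hg => m.pos.ne' (Nat.gcd_eq_zero_iff.1 hg).2⟩
  rw [Finset.sum_congr rfl e4, Finset.sum_comm]
  have e5 : ∀ f ∈ (m : ℕ).divisors,
      (∑ j ∈ Finset.range (m : ℕ),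
        if f ∣ j then ((ArithmeticFunction.moebius f : ℤ) : CyclotomicField m ℚ) * ζ ^ (j * k)
          else 0) =
      ((ArithmeticFunction.moebius f : ℤ) : CyclotomicField m ℚ) *
        (if ((m : ℕ) / f) ∣ k then (((m : ℕ) / f : ℕ) : CyclotomicField m ℚ) else 0) := by
    intro f hf
    obtain ⟨hfm, -⟩ := Nat.mem_divisors.1 hf
    have hf0 : 0 < f := Nat.pos_of_dvd_of_pos hfm m.pos
    rw [← Finset.sum_filter]
    have hb : ∑ j ∈ (Finset.range (m : ℕ)).filter (fun j => f ∣ j),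
        ((ArithmeticFunction.moebius f : ℤ) : CyclotomicField m ℚ) * ζ ^ (j * k) =
        ∑ i ∈ Finset.range ((m : ℕ) / f),
          ((ArithmeticFunction.moebius f : ℤ) : CyclotomicField m ℚ) * ζ ^ ((f * i) * k) := by
      refine Finset.sum_bij' (fun j _ => j / f) (fun i _ => f * i) ?_ ?_ ?_ ?_ ?_
      · intro j hj
        obtain ⟨hjr, hfj⟩ := Finset.mem_filter.1 hj
        exact Finset.mem_range.2
          (Nat.div_lt_div_of_lt_of_dvd hfm (Finset.mem_range.1 hjr))
      · intro i hi
        refine Finset.mem_filter.2 ⟨Finset.mem_range.2 ?_, ⟨i, rfl⟩⟩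
        calc f * i < f * ((m : ℕ) / f) :=
              (Nat.mul_lt_mul_left hf0).2 (Finset.mem_range.1 hi)
          _ = (m : ℕ) := Nat.mul_div_cancel' hfm
      · intro j hj
        exact Nat.mul_div_cancel' (Finset.mem_filter.1 hj).2
      · intro i _
        exact Nat.mul_div_cancel_left i hf0
      · intro j hj
        rw [Nat.mul_div_cancel' (Finset.mem_filter.1 hj).2]
    rw [hb, ← Finset.mul_sum]
    congr 1
    have hprim : IsPrimitiveRoot (ζ ^ f) ((m : ℕ) / f) :=
      hζ.pow m.pos (Nat.mul_div_cancel' hfm).symm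
    have := geom_aux (Nat.div_pos (Nat.le_of_dvd m.pos hfm) hf0) hprim k
    rw [← this]
    refine Finset.sum_congr rfl fun i _ => ?_
    rw [← pow_mul, mul_assoc]
  rw [Finset.sum_congr rfl e5]
  rw [map_sum]
  refine Finset.sum_congr rfl fun f _ => ?_
  rw [map_mul, map_intCast]
  congr 1
  split <;> simp



/-- The `d`-th necklace polynomial `M_d(x) = (1/d) ∑_{e ∣ d} μ(e) x^(d/e)` over `ℚ`. -/
noncomputable def necklacePoly (d : ℕ) : Polynomial ℚ :=
  Polynomial.C ((d : ℚ)⁻¹) *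
    ∑ e ∈ d.divisors, Polynomial.C ((ArithmeticFunction.moebius e : ℤ) : ℚ) *
      Polynomial.X ^ (d / e)

theorem trace_necklace_eval_primitiveRoot (m : ℕ+) (d : ℕ) (hd : 1 ≤ d)
    (ζ : CyclotomicField m ℚ) (hζ : IsPrimitiveRoot ζ m) :
    Algebra.trace ℚ (CyclotomicField m ℚ) (Polynomial.aeval ζ (necklacePoly d)) =
      if d ∣ (m : ℕ) then ((ArithmeticFunction.moebius ((m : ℕ) / d) : ℤ) : ℚ) else 0 := by
  have hd0 : d ≠ 0 := Nat.one_le_iff_ne_zero.1 hd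
  have hdq : ((d : ℚ)) ≠ 0 := Nat.cast_ne_zero.2 hd0
  have h1 : (Polynomial.aeval ζ) (necklacePoly d) =
      (d : ℚ)⁻¹ • ∑ e ∈ d.divisors, ((ArithmeticFunction.moebius e : ℤ) : ℚ) • ζ ^ (d / e) := by
    simp [necklacePoly, Finset.smul_sum, Algebra.smul_def]
    simp only [show ∀ (q : ℚ) (y : CyclotomicField m ℚ), q • y = algebraMap ℚ _ q * y from
      fun q y => Algebra.smul_def q y]
    simp [Finset.mul_sum]
  rw [h1, map_smul, map_sum]
  simp only [show ∀ (q : ℚ) (y : CyclotomicField m ℚ), Algebra.trace ℚ (CyclotomicField m ℚ) (q • y) =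
    q • Algebra.trace ℚ (CyclotomicField m ℚ) y from fun q y => map_smul _ q y]
  simp_rw [trace_zeta_pow m ζ hζ]
  -- reindex inner sums f ↦ m / f
  have hA : ∀ e : ℕ,
      (∑ f ∈ (m : ℕ).divisors, ((ArithmeticFunction.moebius f : ℤ) : ℚ) *
        (if ((m : ℕ) / f) ∣ (d / e) then (((m : ℕ) / f : ℕ) : ℚ) else 0)) =
      ∑ g ∈ (m : ℕ).divisors, ((ArithmeticFunction.moebius ((m : ℕ) / g) : ℤ) : ℚ) *
        (if g ∣ (d / e) then ((g : ℕ) : ℚ) else 0) := by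
    intro e
    rw [← Nat.sum_div_divisors (m : ℕ) (fun g =>
      ((ArithmeticFunction.moebius ((m : ℕ) / g) : ℤ) : ℚ) *
        (if g ∣ (d / e) then ((g : ℕ) : ℚ) else 0))]
    refine Finset.sum_congr rfl fun f hf => ?_
    rw [Nat.div_div_self (Nat.mem_divisors.1 hf).1 m.pos.ne']
  simp_rw [hA, smul_eq_mul]
  -- inner sum over e
  have hC : ∀ g ∈ (m : ℕ).divisors,
      (∑ e ∈ d.divisors, ((ArithmeticFunction.moebius e : ℤ) : ℚ) *
        (((ArithmeticFunction.moebius ((m : ℕ) / g) : ℤ) : ℚ) *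
          (if g ∣ (d / e) then ((g : ℕ) : ℚ) else 0))) =
      ((ArithmeticFunction.moebius ((m : ℕ) / g) : ℤ) : ℚ) *
        (if g = d then (d : ℚ) else 0) := by
    intro g hg
    have key : (∑ e ∈ d.divisors, ((ArithmeticFunction.moebius e : ℤ) : ℚ) *
        (if g ∣ (d / e) then ((g : ℕ) : ℚ) else 0)) =
        if g = d then (d : ℚ) else 0 := by
      by_cases hgd : g ∣ d
      · have hg0 : 0 < g := Nat.pos_of_dvd_of_pos hgd (Nat.pos_of_ne_zero hd0)
        have hdg0 : d / g ≠ 0 := Nat.div_ne_zero_iff_of_dvd hgd |>.2 ⟨hd0, hg0.ne'⟩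
        have hcond : ∀ e ∈ d.divisors, (g ∣ d / e ↔ e ∣ d / g) := by
          intro e he
          obtain ⟨hed, -⟩ := Nat.mem_divisors.1 he
          rw [Nat.dvd_div_iff_mul_dvd hed, Nat.dvd_div_iff_mul_dvd hgd, mul_comm]
        rw [Finset.sum_congr rfl fun e he => by
          rw [if_congr (hcond e he) rfl rfl]]
        have hfilter : (d.divisors.filter (fun e => e ∣ d / g)) = (d / g).divisors := by
          ext e
          simp only [Finset.mem_filter, Nat.mem_divisors]
          exact ⟨fun h => ⟨h.2, hdg0⟩,
            fun h => ⟨⟨h.1.trans (Nat.div_dvd_of_dvd hgd), hd0⟩, h.1⟩⟩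
        rw [show (∑ e ∈ d.divisors, ((ArithmeticFunction.moebius e : ℤ) : ℚ) *
            (if e ∣ d / g then ((g : ℕ) : ℚ) else 0)) =
            ∑ e ∈ d.divisors, (if e ∣ d / g then
              ((ArithmeticFunction.moebius e : ℤ) : ℚ) * ((g : ℕ) : ℚ) else 0) from
          Finset.sum_congr rfl fun e _ => by split <;> simp]
        rw [← Finset.sum_filter, hfilter, ← Finset.sum_mul, moebius_sum]
        have hiff : d / g = 1 ↔ g = d := by
          constructor
          · intro h
            conv_rhs => rw [← Nat.mul_div_cancel' hgd, h, mul_one]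
          · intro h; subst h; exact Nat.div_self hg0
        by_cases h : g = d
        · rw [if_pos (hiff.2 h), if_pos h, one_mul, h]
        · rw [if_neg (fun h1 => h (hiff.1 h1)), if_neg h, zero_mul]
      · have hz : ∀ e ∈ d.divisors, ¬ g ∣ d / e := by
          intro e he hge
          obtain ⟨hed, -⟩ := Nat.mem_divisors.1 he
          exact hgd (hge.trans (Nat.div_dvd_of_dvd hed))
        rw [Finset.sum_congr rfl fun e he => by rw [if_neg (hz e he), mul_zero]]
        rw [Finset.sum_const_zero, if_neg (fun h => hgd (by rw [h]))]
    calc (∑ e ∈ d.divisors, ((ArithmeticFunction.moebius e : ℤ) : ℚ) *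
        (((ArithmeticFunction.moebius ((m : ℕ) / g) : ℤ) : ℚ) *
          (if g ∣ (d / e) then ((g : ℕ) : ℚ) else 0)))
        = ((ArithmeticFunction.moebius ((m : ℕ) / g) : ℤ) : ℚ) *
          ∑ e ∈ d.divisors, ((ArithmeticFunction.moebius e : ℤ) : ℚ) *
            (if g ∣ (d / e) then ((g : ℕ) : ℚ) else 0) := by
          rw [Finset.mul_sum]; exact Finset.sum_congr rfl fun e _ => by ring
      _ = _ := by rw [key]
  have hD : (∑ g ∈ (m : ℕ).divisors,
      ((ArithmeticFunction.moebius ((m : ℕ) / g) : ℤ) : ℚ) *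
        (if g = d then (d : ℚ) else 0)) =
      if d ∈ (m : ℕ).divisors then
        ((ArithmeticFunction.moebius ((m : ℕ) / d) : ℤ) : ℚ) * (d : ℚ) else 0 := by
    rw [Finset.sum_congr rfl fun g _ => by
      rw [mul_ite, mul_zero] ]
    exact Finset.sum_ite_eq' _ _ _
  have hsum : (∑ e ∈ d.divisors, ((ArithmeticFunction.moebius e : ℤ) : ℚ) *
      ∑ g ∈ (m : ℕ).divisors, ((ArithmeticFunction.moebius ((m : ℕ) / g) : ℤ) : ℚ) *
        (if g ∣ (d / e) then ((g : ℕ) : ℚ) else 0)) =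
      if d ∈ (m : ℕ).divisors then
        ((ArithmeticFunction.moebius ((m : ℕ) / d) : ℤ) : ℚ) * (d : ℚ) else 0 := by
    simp_rw [Finset.mul_sum]
    rw [Finset.sum_comm, Finset.sum_congr rfl hC, hD]
  rw [hsum]
  by_cases hdm : d ∣ (m : ℕ)
  · rw [if_pos (Nat.mem_divisors.2 ⟨hdm, m.pos.ne'⟩), if_pos hdm]
    field_simp
  · rw [if_neg (fun h => hdm (Nat.mem_divisors.1 h).1), if_neg hdm, mul_zero]
end

section
/- Let m, d ≥ 1 with d not dividing m, and let ζ_m be a primitive m-th root of unity. If M_d(ζ_m) is rational, then M_d(ζ_m) = 0, where M_d is the d-th necklace polynomial. -/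
open Polynomial

open Finset ArithmeticFunction in
lemma sum_moebius_divisors (n : ℕ) :
    ∑ e ∈ n.divisors, (moebius e : ℤ) = if n = 1 then 1 else 0 := by
  have h := congrArg (fun f : ArithmeticFunction ℤ => f n) moebius_mul_coe_zeta
  simp only [ArithmeticFunction.coe_mul_zeta_apply, ArithmeticFunction.one_apply] at h
  exact h

open Finset in
lemma sum_pow_nthRootsFinset {n : ℕ} (hn : 0 < n) (a : ℕ) :
    ∑ ξ ∈ nthRootsFinset n (1 : ℂ), ξ ^ a = if n ∣ a then (n : ℂ) else 0 := by
  obtain ⟨η, hη⟩ : ∃ η : ℂ, IsPrimitiveRoot η n :=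
    ⟨_, Complex.isPrimitiveRoot_exp n hn.ne'⟩
  have hinj : Set.InjOn (η ^ ·) (Finset.range n) := fun i hi j hj hij =>
    hη.pow_inj (mem_range.1 hi) (mem_range.1 hj) hij
  have himg : nthRootsFinset n (1 : ℂ) = (Finset.range n).image (η ^ ·) := by
    symm
    apply Finset.eq_of_subset_of_card_le
    · intro x hx
      simp only [Finset.mem_image, Finset.mem_range] at hx
      obtain ⟨k, hk, rfl⟩ := hx
      rw [Polynomial.mem_nthRootsFinset hn, ← pow_mul, mul_comm, pow_mul,
        hη.pow_eq_one, one_pow]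
    · rw [hη.card_nthRootsFinset, Finset.card_image_of_injOn hinj, Finset.card_range]
  rw [himg, Finset.sum_image hinj]
  have hcomm : ∀ k, (η ^ k) ^ a = (η ^ a) ^ k := fun k => by
    rw [← pow_mul, mul_comm, pow_mul]
  simp_rw [hcomm]
  by_cases hdvd : n ∣ a
  · have h1 : η ^ a = 1 := (hη.pow_eq_one_iff_dvd a).2 hdvd
    simp [h1, hdvd]
  · have h1 : η ^ a ≠ 1 := fun h => hdvd ((hη.pow_eq_one_iff_dvd a).1 h)
    rw [if_neg hdvd, geom_sum_eq h1]
    have h2 : (η ^ a) ^ n = 1 := by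
      rw [← pow_mul, mul_comm, pow_mul, hη.pow_eq_one, one_pow]
    rw [h2]
    simp

open Finset ArithmeticFunction in
lemma sum_pow_primitiveRoots (a : ℕ) {n : ℕ} (hn : 0 < n) :
    ∑ ξ ∈ primitiveRoots n ℂ, ξ ^ a
      = ∑ x ∈ n.divisorsAntidiagonal,
          ((moebius x.1 : ℤ) : ℂ) * (if x.2 ∣ a then (x.2 : ℂ) else 0) := by
  have key := (sum_eq_iff_sum_mul_moebius_eq
      (R := ℂ) (f := fun i => ∑ ξ ∈ primitiveRoots i ℂ, ξ ^ a)
      (g := fun i => if i ∣ a then (i : ℂ) else 0)).1 ?_ n hn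
  · exact key.symm
  · intro k hk
    obtain ⟨η, hη⟩ : ∃ η : ℂ, IsPrimitiveRoot η k :=
      ⟨_, Complex.isPrimitiveRoot_exp k hk.ne'⟩
    rw [← sum_pow_nthRootsFinset hk a, IsPrimitiveRoot.nthRoots_one_eq_biUnion_primitiveRoots,
      Finset.sum_biUnion]
    intro i _ j _ hij
    exact IsPrimitiveRoot.disjoint hij

theorem necklace_eval_primitiveRoot_eq_zero_of_rational (m d : ℕ) (hm : 1 ≤ m)
    (hd : 1 ≤ d) (hnd : ¬ d ∣ m) (ζ : ℂ) (hζ : IsPrimitiveRoot ζ m)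
    (hrat : ∃ r : ℚ, Polynomial.aeval ζ (necklacePoly d) = (r : ℂ)) :
    Polynomial.aeval ζ (necklacePoly d) = 0 := by
  classical
  obtain ⟨r, hr⟩ := hrat
  suffices hr0 : r = 0 by rw [hr, hr0]; simp
  -- the cyclotomic polynomial divides P - C r
  have hm0 : 0 < m := hm
  have hroot : Polynomial.aeval ζ (necklacePoly d - Polynomial.C r) = 0 := by
    simp [hr]
  have hdvd : cyclotomic m ℚ ∣ necklacePoly d - Polynomial.C r := by
    rw [cyclotomic_eq_minpoly_rat hζ hm0]
    exact minpoly.dvd ℚ ζ hroot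
  obtain ⟨q, hq⟩ := hdvd
  -- every primitive m-th root of unity evaluates to r
  have heval : ∀ ξ ∈ primitiveRoots m ℂ, Polynomial.aeval ξ (necklacePoly d) = (r : ℂ) := by
    intro ξ hξ
    have hξp : IsPrimitiveRoot ξ m := (mem_primitiveRoots hm0).1 hξ
    have hcyc : Polynomial.aeval ξ (cyclotomic m ℚ) = 0 := by
      have : (Polynomial.map (algebraMap ℚ ℂ) (cyclotomic m ℚ)).IsRoot ξ := by
        rw [map_cyclotomic]
        exact hξp.isRoot_cyclotomic hm0
      rwa [Polynomial.aeval_def, ← Polynomial.eval_map]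
    have := congrArg (Polynomial.aeval ξ) hq
    rw [map_sub, map_mul, hcyc, zero_mul, sub_eq_zero] at this
    simpa using this
  -- sum over all primitive roots
  have hsum : ∑ ξ ∈ primitiveRoots m ℂ, Polynomial.aeval ξ (necklacePoly d)
      = (Nat.totient m : ℂ) * (r : ℂ) := by
    rw [Finset.sum_congr rfl heval, Finset.sum_const, hζ.card_primitiveRoots]
    simp [mul_comm]
  -- compute the sum explicitly
  have haeval : ∀ ξ : ℂ, Polynomial.aeval ξ (necklacePoly d)
      = (d : ℂ)⁻¹ * ∑ e ∈ d.divisors,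
          ((ArithmeticFunction.moebius e : ℤ) : ℂ) * ξ ^ (d / e) := by
    intro ξ
    simp [necklacePoly, map_sum]
  have hswap : ∑ ξ ∈ primitiveRoots m ℂ, Polynomial.aeval ξ (necklacePoly d)
      = (d : ℂ)⁻¹ * ∑ e ∈ d.divisors,
          ((ArithmeticFunction.moebius e : ℤ) : ℂ) *
            ∑ ξ ∈ primitiveRoots m ℂ, ξ ^ (d / e) := by
    rw [Finset.sum_congr rfl fun ξ _ => haeval ξ, ← Finset.mul_sum, Finset.sum_comm]
    congr 1
    exact Finset.sum_congr rfl fun e _ => (Finset.mul_sum _ _ _).symm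
  -- the inner sum vanishes
  have hzero : ∑ e ∈ d.divisors,
      ((ArithmeticFunction.moebius e : ℤ) : ℂ) *
        ∑ ξ ∈ primitiveRoots m ℂ, ξ ^ (d / e) = 0 := by
    have hd0 : 0 < d := hd
    calc ∑ e ∈ d.divisors,
          ((ArithmeticFunction.moebius e : ℤ) : ℂ) *
            ∑ ξ ∈ primitiveRoots m ℂ, ξ ^ (d / e)
        = ∑ e ∈ d.divisors, ∑ x ∈ m.divisorsAntidiagonal,
            ((ArithmeticFunction.moebius e : ℤ) : ℂ) *
              (((ArithmeticFunction.moebius x.1 : ℤ) : ℂ) *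
                (if x.2 ∣ d / e then (x.2 : ℂ) else 0)) := by
          refine Finset.sum_congr rfl fun e _ => ?_
          rw [sum_pow_primitiveRoots (d / e) hm0, Finset.mul_sum]
      _ = ∑ x ∈ m.divisorsAntidiagonal, ((ArithmeticFunction.moebius x.1 : ℤ) : ℂ) *
            ∑ e ∈ d.divisors, ((ArithmeticFunction.moebius e : ℤ) : ℂ) *
              (if x.2 ∣ d / e then (x.2 : ℂ) else 0) := by
          rw [Finset.sum_comm]
          refine Finset.sum_congr rfl fun x _ => ?_
          rw [Finset.mul_sum]
          refine Finset.sum_congr rfl fun e _ => ?_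
          ring
      _ = 0 := by
          refine Finset.sum_eq_zero fun x hx => ?_
          obtain ⟨hxm, hm0'⟩ := Nat.mem_divisorsAntidiagonal.1 hx
          set f := x.2 with hf
          have hfm : f ∣ m := Dvd.intro_left x.1 hxm
          have hinner : ∑ e ∈ d.divisors,
              ((ArithmeticFunction.moebius e : ℤ) : ℂ) *
                (if f ∣ d / e then (f : ℂ) else 0) = 0 := by
            by_cases hfd : f ∣ d
            · have hfd1 : f ≠ d := fun h => hnd (h ▸ hfm)
              have hiff : ∀ e, e ∈ d.divisors ∧ f ∣ d / e ↔ e ∈ (d / f).divisors := by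
                intro e
                have hdfpos : 0 < d / f :=
                  Nat.div_pos (Nat.le_of_dvd hd0 hfd) (Nat.pos_of_dvd_of_pos hfd hd0)
                constructor
                · rintro ⟨he, hfe⟩
                  have hed : e ∣ d := (Nat.mem_divisors.1 he).1
                  have h1 : e * f ∣ d := (Nat.dvd_div_iff_mul_dvd hed).1 hfe
                  have h2 : f * e ∣ d := by rwa [mul_comm] at h1
                  exact Nat.mem_divisors.2 ⟨(Nat.dvd_div_iff_mul_dvd hfd).2 h2, hdfpos.ne'⟩
                · intro he
                  obtain ⟨hedf, -⟩ := Nat.mem_divisors.1 he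
                  have hfe : f * e ∣ d := (Nat.dvd_div_iff_mul_dvd hfd).1 hedf
                  have hed : e ∣ d := (dvd_mul_left e f).trans hfe
                  have h2 : e * f ∣ d := by rwa [mul_comm] at hfe
                  exact ⟨Nat.mem_divisors.2 ⟨hed, hd0.ne'⟩,
                    (Nat.dvd_div_iff_mul_dvd hed).2 h2⟩
              calc ∑ e ∈ d.divisors,
                    ((ArithmeticFunction.moebius e : ℤ) : ℂ) *
                      (if f ∣ d / e then (f : ℂ) else 0)
                  = ∑ e ∈ d.divisors.filter (fun e => f ∣ d / e),
                      ((ArithmeticFunction.moebius e : ℤ) : ℂ) * (f : ℂ) := by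
                    rw [Finset.sum_filter]
                    refine Finset.sum_congr rfl fun e _ => ?_
                    by_cases h : f ∣ d / e <;> simp [h]
                _ = ∑ e ∈ (d / f).divisors,
                      ((ArithmeticFunction.moebius e : ℤ) : ℂ) * (f : ℂ) := by
                    refine Finset.sum_congr ?_ fun _ _ => rfl
                    ext e
                    rw [Finset.mem_filter]
                    exact hiff e
                _ = 0 := by
                    rw [← Finset.sum_mul]
                    have : ∑ e ∈ (d / f).divisors,
                        ((ArithmeticFunction.moebius e : ℤ) : ℂ) = 0 := by
                      have h1 : d / f ≠ 1 := by
                        intro h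
                        exact hfd1 (Nat.eq_of_dvd_of_div_eq_one hfd h)
                      have := sum_moebius_divisors (d / f)
                      rw [if_neg h1] at this
                      exact_mod_cast congrArg (fun z : ℤ => (z : ℂ)) this
                    rw [this, zero_mul]
            · have hempty : ∀ e ∈ d.divisors, ¬ f ∣ d / e := by
                intro e he hfe
                have hed : e ∣ d := (Nat.mem_divisors.1 he).1
                have h1 : e * f ∣ d := (Nat.dvd_div_iff_mul_dvd hed).1 hfe
                exact hfd ((dvd_mul_left f e).trans h1)
              refine Finset.sum_eq_zero fun e he => ?_
              rw [if_neg (hempty e he), mul_zero]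
          rw [hinner, mul_zero]
  -- conclude
  rw [hswap, hzero, mul_zero] at hsum
  have htot : (Nat.totient m : ℂ) ≠ 0 := by
    exact_mod_cast (Nat.totient_pos.2 hm0).ne'
  have : (r : ℂ) = 0 := by
    rcases mul_eq_zero.1 hsum.symm with h | h
    · exact absurd h htot
    · exact h
  exact_mod_cast this
end

section
/- If d divides m and m/d is squarefree, then the m-th cyclotomic polynomial Φ_m(x) does not divide the d-th necklace polynomial M_d(x) in ℚ[x]. -/
open Polynomial

private lemma moebius_sum_int (n : ℕ) :
    (∑ u ∈ n.divisors, (ArithmeticFunction.moebius u : ℤ)) = if n = 1 then 1 else 0 := by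
  rw [← ArithmeticFunction.coe_mul_zeta_apply, ArithmeticFunction.moebius_mul_coe_zeta,
    ArithmeticFunction.one_apply]

private lemma moebius_sum_complex (n : ℕ) :
    (∑ u ∈ n.divisors, ((ArithmeticFunction.moebius u : ℤ) : ℂ)) = if n = 1 then 1 else 0 := by
  have h := congrArg (fun z : ℤ => (z : ℂ)) (moebius_sum_int n)
  push_cast at h
  rw [h]

private lemma geom_root_sum (z : ℂ) (k : ℕ) (hz : z ^ k = 1) :
    (∑ i ∈ Finset.range k, z ^ i) = if z = 1 then (k : ℂ) else 0 := by
  split_ifs with h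
  · simp [h]
  · rw [geom_sum_eq h, hz]; simp

/-- Sum over multiples of `u` in `range m` reindexed. -/
private lemma sum_multiples (u m : ℕ) (hu : u ∣ m) (hu0 : 0 < u) (g : ℕ → ℂ) :
    (∑ j ∈ (Finset.range m).filter (fun j => u ∣ j), g j)
      = ∑ i ∈ Finset.range (m / u), g (u * i) := by
  have hmu : u * (m / u) = m := Nat.mul_div_cancel' hu
  refine Finset.sum_nbij' (fun j => j / u) (fun i => u * i) ?_ ?_ ?_ ?_ ?_
  · intro j hj
    simp only [Finset.mem_filter, Finset.mem_range] at hj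
    simp only [Finset.mem_range]
    obtain ⟨hjm, i, rfl⟩ := hj
    rw [Nat.mul_div_cancel_left _ hu0]
    exact Nat.lt_of_mul_lt_mul_left (a := u) (by omega)
  · intro i hi
    simp only [Finset.mem_range] at hi
    simp only [Finset.mem_filter, Finset.mem_range]
    refine ⟨?_, dvd_mul_right u i⟩
    have h2 : u * (i + 1) ≤ u * (m / u) := Nat.mul_le_mul_left u hi
    have h3 : u * (i + 1) = u * i + u := by ring
    omega
  · intro j hj
    exact Nat.mul_div_cancel' (Finset.mem_filter.mp hj).2
  · intro i _
    exact Nat.mul_div_cancel_left _ hu0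
  · intro j hj
    rw [Nat.mul_div_cancel' (Finset.mem_filter.mp hj).2]

theorem cyclotomic_not_dvd_necklace (m d : ℕ) (hm : 1 ≤ m) (hd : 1 ≤ d)
    (hdm : d ∣ m) (hsq : Squarefree (m / d)) :
    ¬ Polynomial.cyclotomic m ℚ ∣ necklacePoly d := by
  intro hdvd
  have hm0 : (m : ℕ) ≠ 0 := by omega
  have hd0 : (d : ℕ) ≠ 0 := by omega
  set μC : ℕ → ℂ := fun u => ((ArithmeticFunction.moebius u : ℤ) : ℂ) with hμC
  set ω : ℂ := Complex.exp (2 * Real.pi * Complex.I / m) with hω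
  have hprim : IsPrimitiveRoot ω m := Complex.isPrimitiveRoot_exp m hm0
  -- Step 1: the necklace polynomial vanishes at every primitive m-th root of unity
  have hroot : ∀ j : ℕ, Nat.gcd j m = 1 →
      (∑ e ∈ d.divisors, μC e * ω ^ (j * (d / e))) = 0 := by
    intro j hj
    obtain ⟨Q, hQ⟩ := hdvd
    have hprimj : IsPrimitiveRoot (ω ^ j) m := hprim.pow_of_coprime j hj
    have hcyc : (Polynomial.aeval (ω ^ j)) (cyclotomic m ℚ) = 0 := by
      have hr := hprimj.isRoot_cyclotomic (R := ℂ) (by omega)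
      rw [Polynomial.IsRoot] at hr
      rw [Polynomial.aeval_def, Polynomial.eval₂_eq_eval_map, Polynomial.map_cyclotomic]
      exact hr
    have h1 : (Polynomial.aeval (ω ^ j)) (necklacePoly d) = 0 := by
      rw [hQ, map_mul, hcyc, zero_mul]
    simp only [necklacePoly, map_mul, map_sum, Polynomial.aeval_C, map_pow,
      Polynomial.aeval_X, map_intCast, map_inv₀, map_natCast] at h1
    have hdinv : ((d : ℂ))⁻¹ ≠ 0 := by
      simp [Nat.cast_ne_zero, hd0]
    rcases mul_eq_zero.mp h1 with h | h
    · exact absurd h hdinv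
    · rw [← h]
      apply Finset.sum_congr rfl
      intro e _
      rw [← pow_mul]
  -- Step 2: compute ∑_{j coprime to m} ω^(j*f)
  have hS : ∀ f : ℕ,
      (∑ j ∈ (Finset.range m).filter (fun j => Nat.gcd j m = 1), ω ^ (j * f))
        = ∑ u ∈ m.divisors, μC u * (if (m / u) ∣ f then ((m / u : ℕ) : ℂ) else 0) := by
    intro f
    rw [Finset.sum_filter]
    have step1 : ∀ j ∈ Finset.range m,
        (if Nat.gcd j m = 1 then ω ^ (j * f) else 0)
          = ∑ u ∈ m.divisors, (if u ∣ j then μC u * ω ^ (j * f) else 0) := by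
      intro j _
      have hgcd : (Nat.gcd j m).divisors = m.divisors.filter (· ∣ j) := by
        ext u
        simp only [Nat.mem_divisors, Finset.mem_filter]
        constructor
        · rintro ⟨hu, _⟩
          exact ⟨⟨(Nat.dvd_gcd_iff.mp hu).2, hm0⟩, (Nat.dvd_gcd_iff.mp hu).1⟩
        · rintro ⟨⟨hum, _⟩, huj⟩
          exact ⟨Nat.dvd_gcd huj hum, fun h => hm0 (Nat.eq_zero_of_gcd_eq_zero_right h)⟩
      have hμ := moebius_sum_complex (Nat.gcd j m)
      rw [hgcd, Finset.sum_filter] at hμ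
      calc (if Nat.gcd j m = 1 then ω ^ (j * f) else 0)
          = (if Nat.gcd j m = 1 then (1 : ℂ) else 0) * ω ^ (j * f) := by
            split_ifs <;> simp
        _ = (∑ u ∈ m.divisors, (if u ∣ j then μC u else 0)) * ω ^ (j * f) := by rw [hμ]
        _ = ∑ u ∈ m.divisors, (if u ∣ j then μC u * ω ^ (j * f) else 0) := by
            rw [Finset.sum_mul]
            apply Finset.sum_congr rfl
            intro u _
            split_ifs <;> simp
    rw [Finset.sum_congr rfl step1, Finset.sum_comm]
    apply Finset.sum_congr rfl
    intro u hu
    obtain ⟨hum, -⟩ := Nat.mem_divisors.mp hu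
    have hu0 : 0 < u := Nat.pos_of_dvd_of_pos hum (by omega)
    rw [← Finset.sum_filter, sum_multiples u m hum hu0]
    have hformula : ∀ i : ℕ, μC u * ω ^ (u * i * f) = μC u * (ω ^ (u * f)) ^ i := by
      intro i
      rw [← pow_mul]
      ring_nf
    rw [Finset.sum_congr rfl (fun i _ => hformula i), ← Finset.mul_sum]
    rw [geom_root_sum (ω ^ (u * f)) (m / u) (by
      rw [← pow_mul]
      apply (hprim.pow_eq_one_iff_dvd _).mpr
      have h5 : u * f * (m / u) = f * (u * (m / u)) := by ring
      rw [h5, Nat.mul_div_cancel' hum]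
      exact dvd_mul_left m f)]
    have hcond : (ω ^ (u * f) = 1) ↔ (m / u) ∣ f := by
      rw [hprim.pow_eq_one_iff_dvd]
      obtain ⟨k, rfl⟩ := hum
      rw [Nat.mul_div_cancel_left _ hu0]
      exact mul_dvd_mul_iff_left (by omega : u ≠ 0)
    congr 1
    split_ifs with h1 h2 h2
    · rfl
    · exact absurd (hcond.mp h1) h2
    · exact absurd (hcond.mpr h2) h1
    · rfl
  -- Step 3: the inner Möbius sum over divisors of d
  have hL4 : ∀ k : ℕ,
      (∑ e ∈ d.divisors, μC e * (if k ∣ d / e then (1 : ℂ) else 0))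
        = if k = d then 1 else 0 := by
    intro k
    by_cases hkd : k ∣ d
    · have hcong : ∀ e ∈ d.divisors,
          μC e * (if k ∣ d / e then (1 : ℂ) else 0)
            = (if e ∣ d / k then μC e else 0) := by
        intro e he
        obtain ⟨hed, -⟩ := Nat.mem_divisors.mp he
        have hiff : k ∣ d / e ↔ e ∣ d / k := by
          rw [Nat.dvd_div_iff_mul_dvd hed, Nat.dvd_div_iff_mul_dvd hkd, mul_comm]
        split_ifs with h1 h2 h2
        · ring
        · exact absurd (hiff.mp h1) h2
        · exact absurd (hiff.mpr h2) h1
        · ring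
      rw [Finset.sum_congr rfl hcong, ← Finset.sum_filter]
      have hset : d.divisors.filter (· ∣ d / k) = (d / k).divisors := by
        ext e
        simp only [Finset.mem_filter, Nat.mem_divisors]
        constructor
        · rintro ⟨⟨-, -⟩, hedk⟩
          refine ⟨hedk, ?_⟩
          have : 0 < d / k := Nat.div_pos (Nat.le_of_dvd (by omega) hkd)
            (Nat.pos_of_dvd_of_pos hkd (by omega))
          omega
        · rintro ⟨hedk, h0⟩
          exact ⟨⟨hedk.trans (Nat.div_dvd_of_dvd hkd), hd0⟩, hedk⟩
      rw [hset, moebius_sum_complex]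
      have hiff2 : d / k = 1 ↔ k = d := by
        constructor
        · intro h
          have h6 := Nat.mul_div_cancel' hkd
          rw [h, mul_one] at h6
          exact h6
        · rintro rfl
          exact Nat.div_self (by omega)
      split_ifs with h1 h2 h2
      · rfl
      · exact absurd (hiff2.mp h1) h2
      · exact absurd (hiff2.mpr h2) h1
      · rfl
    · have hzero : ∀ e ∈ d.divisors, μC e * (if k ∣ d / e then (1 : ℂ) else 0) = 0 := by
        intro e he
        obtain ⟨hed, -⟩ := Nat.mem_divisors.mp he
        have : ¬ (k ∣ d / e) := fun h => hkd (h.trans (Nat.div_dvd_of_dvd hed))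
        simp [this]
      rw [Finset.sum_eq_zero hzero]
      have : k ≠ d := fun h => hkd (h ▸ dvd_refl d)
      simp [this]
  -- Step 4: combine everything
  have h0 : (∑ j ∈ (Finset.range m).filter (fun j => Nat.gcd j m = 1),
      ∑ e ∈ d.divisors, μC e * ω ^ (j * (d / e))) = 0 := by
    apply Finset.sum_eq_zero
    intro j hj
    exact hroot j (Finset.mem_filter.mp hj).2
  rw [Finset.sum_comm] at h0
  have h1 : (∑ e ∈ d.divisors, μC e *
      ∑ u ∈ m.divisors, μC u * (if (m / u) ∣ (d / e) then ((m / u : ℕ) : ℂ) else 0)) = 0 := by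
    refine Eq.trans ?_ h0
    apply Finset.sum_congr rfl
    intro e _
    rw [← hS (d / e), Finset.mul_sum]
  have h2 : (∑ u ∈ m.divisors, ∑ e ∈ d.divisors,
      μC e * (μC u * (if (m / u) ∣ (d / e) then ((m / u : ℕ) : ℂ) else 0))) = 0 := by
    refine Eq.trans ?_ h1
    rw [Finset.sum_comm]
    apply Finset.sum_congr rfl
    intro e _
    rw [Finset.mul_sum]
  have h3 : (∑ u ∈ m.divisors,
      μC u * ((m / u : ℕ) : ℂ) * (if m / u = d then (1 : ℂ) else 0)) = 0 := by
    refine Eq.trans ?_ h2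
    apply Finset.sum_congr rfl
    intro u _
    rw [← hL4 (m / u), Finset.mul_sum]
    apply Finset.sum_congr rfl
    intro e _
    split_ifs <;> ring
  have hmd : m / d ∣ m := Nat.div_dvd_of_dvd hdm
  have hmem : m / d ∈ m.divisors := Nat.mem_divisors.mpr ⟨hmd, hm0⟩
  have h4 : (∑ u ∈ m.divisors,
      (if u = m / d then μC u * ((m / u : ℕ) : ℂ) else 0)) = 0 := by
    refine Eq.trans ?_ h3
    apply Finset.sum_congr rfl
    intro u hu
    obtain ⟨hum, -⟩ := Nat.mem_divisors.mp hu
    have hiff : (u = m / d) ↔ (m / u = d) := by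
      constructor
      · rintro rfl
        exact Nat.div_div_self hdm hm0
      · rintro rfl
        exact (Nat.div_div_self hum hm0).symm
    split_ifs with hh1 hh2 hh2
    · ring
    · exact absurd (hiff.mp hh1) hh2
    · exact absurd (hiff.mpr hh2) hh1
    · ring
  rw [Finset.sum_ite_eq' m.divisors (m / d)
    (fun u => μC u * ((m / u : ℕ) : ℂ)), if_pos hmem, Nat.div_div_self hdm hm0] at h4
  have hμ0 : μC (m / d) = 0 := by
    rcases mul_eq_zero.mp h4 with h | h
    · exact h
    · exact absurd h (by simp [Nat.cast_ne_zero, hd0])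
  have hfin : (ArithmeticFunction.moebius (m / d) : ℤ) = 0 := by
    simp only [hμC] at hμ0
    exact_mod_cast hμ0
  exact ArithmeticFunction.moebius_ne_zero_iff_squarefree.mpr hsq hfin
end

section
/- Let R be a binomial ring (torsion-free commutative ring closed under binomial coefficients binom(a, n) for all a ∈ R, n ≥ 0). For any sequence (a_d)_{d≥0} in R with a_0 = 1, there exists a unique sequence (b_j)_{j≥1} in R such that Σ_{d≥0} a_d t^d = Π_{j≥1} (1/(1-t^j))^{b_j} in 1 + t R[[t]], where (1/(1-t))^b := Σ_{n≥0} binom(b+n-1, n) t^n. -/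
open PowerSeries Finset

section Aux

variable {R : Type*} [CommRing R] [BinomialRing R]

/-- The factor series. -/
private noncomputable def epF (x : R) (j : ℕ) : R⟦X⟧ :=
  PowerSeries.mk fun n => if j ∣ n then Ring.multichoose x (n / j) else 0

private lemma epF_coeff_zero (x : R) (j : ℕ) : (PowerSeries.coeff 0) (epF x j) = 1 := by
  simp [epF, Ring.multichoose_zero_right]

private lemma epF_coeff_lt (x : R) {j n : ℕ} (h1 : 1 ≤ n) (h2 : n < j) :
    (PowerSeries.coeff n) (epF x j) = 0 := by
  have : ¬ j ∣ n := Nat.not_dvd_of_pos_of_lt h1 h2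
  simp [epF, this]

private lemma epF_coeff_self (x : R) {j : ℕ} (hj : 1 ≤ j) :
    (PowerSeries.coeff j) (epF x j) = x := by
  simp [epF, Nat.div_self hj, Ring.multichoose_one_right]

/-- The partial product indexed by naturals. -/
private noncomputable def epP (c : ℕ → R) (N : ℕ) : R⟦X⟧ :=
  ∏ j ∈ Finset.Icc 1 N, epF (c j) j

private lemma epP_congr {c c' : ℕ → R} {N : ℕ} (h : ∀ i, 1 ≤ i → i ≤ N → c i = c' i) :
    epP c N = epP c' N := by
  refine Finset.prod_congr rfl fun j hj => ?_
  rw [Finset.mem_Icc] at hj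
  rw [h j hj.1 hj.2]

private lemma epP_coeff_zero (c : ℕ → R) (N : ℕ) :
    (PowerSeries.coeff 0) (epP c N) = 1 := by
  rw [PowerSeries.coeff_zero_eq_constantCoeff, epP, map_prod]
  refine Finset.prod_eq_one fun j hj => ?_
  rw [← PowerSeries.coeff_zero_eq_constantCoeff_apply, epF_coeff_zero]

private lemma X_pow_dvd_prod_sub_one {ι : Type*} (s : Finset ι) (f : ι → R⟦X⟧) (k : ℕ)
    (h : ∀ i ∈ s, (X : R⟦X⟧) ^ k ∣ f i - 1) :
    (X : R⟦X⟧) ^ k ∣ (∏ i ∈ s, f i) - 1 := by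
  induction s using Finset.cons_induction with
  | empty => simp
  | cons i s hi ih =>
    rw [Finset.prod_cons]
    have h1 : (X : R⟦X⟧) ^ k ∣ f i - 1 := h i (Finset.mem_cons_self i s)
    have h2 : (X : R⟦X⟧) ^ k ∣ (∏ j ∈ s, f j) - 1 :=
      ih fun j hj => h j (Finset.mem_cons_of_mem hj)
    have : f i * ∏ j ∈ s, f j - 1 = f i * ((∏ j ∈ s, f j) - 1) + (f i - 1) := by ring
    rw [this]
    exact dvd_add (Dvd.dvd.mul_left h2 _) h1

private lemma epF_sub_one_dvd (x : R) {j k : ℕ} (hk : k ≤ j) :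
    (X : R⟦X⟧) ^ k ∣ epF x j - 1 := by
  rw [PowerSeries.X_pow_dvd_iff]
  intro m hm
  rw [map_sub]
  rcases Nat.eq_zero_or_pos m with h0 | h0
  · subst h0; rw [epF_coeff_zero]; simp
  · rw [epF_coeff_lt x h0 (lt_of_lt_of_le hm hk)]
    simp [PowerSeries.coeff_one, h0.ne']

/-- Stability: the coefficient at `d` only depends on the first `d` factors. -/
private lemma epP_coeff_stable (c : ℕ → R) {d N : ℕ} (hd : 1 ≤ d) (hN : d ≤ N) :
    (PowerSeries.coeff d) (epP c N) = (PowerSeries.coeff d) (epP c d) := by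
  have hsplit : Finset.Icc 1 N = Finset.Icc 1 d ∪ Finset.Icc (d + 1) N := by
    ext x
    simp only [Finset.mem_Icc, Finset.mem_union]
    omega
  have hdisj : Disjoint (Finset.Icc 1 d) (Finset.Icc (d + 1) N) := by
    rw [Finset.disjoint_left]
    intro x hx hx'
    rw [Finset.mem_Icc] at hx hx'
    omega
  rw [epP, hsplit, Finset.prod_union hdisj]
  set P := ∏ j ∈ Finset.Icc 1 d, epF (c j) j
  set Q := ∏ j ∈ Finset.Icc (d + 1) N, epF (c j) j
  have hQ : (X : R⟦X⟧) ^ (d + 1) ∣ Q - 1 := by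
    apply X_pow_dvd_prod_sub_one
    intro j hj
    rw [Finset.mem_Icc] at hj
    exact epF_sub_one_dvd _ (by omega)
  have hPQ : (X : R⟦X⟧) ^ (d + 1) ∣ P * Q - P := by
    have : P * Q - P = P * (Q - 1) := by ring
    rw [this]
    exact hQ.mul_left P
  have := (PowerSeries.X_pow_dvd_iff.mp hPQ) d (by omega)
  rw [map_sub, sub_eq_zero] at this
  exact this

/-- Recursion step. -/
private lemma epP_coeff_step (c : ℕ → R) {d : ℕ} (hd : 1 ≤ d) :
    (PowerSeries.coeff d) (epP c d) =
      (PowerSeries.coeff d) (epP c (d - 1)) + c d := by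
  have hins : Finset.Icc 1 d = insert d (Finset.Icc 1 (d - 1)) := by
    ext x
    simp only [Finset.mem_Icc, Finset.mem_insert]
    omega
  have hnot : d ∉ Finset.Icc 1 (d - 1) := by
    rw [Finset.mem_Icc]; omega
  rw [epP, hins, Finset.prod_insert hnot]
  rw [PowerSeries.coeff_mul]
  have hsub : ({(0, d), (d, 0)} : Finset (ℕ × ℕ)) ⊆ Finset.HasAntidiagonal.antidiagonal d := by
    intro p hp
    simp only [Finset.mem_insert, Finset.mem_singleton] at hp
    rcases hp with rfl | rfl <;> simp
  rw [← Finset.sum_subset hsub ?van]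
  case van =>
    intro p hp hnp
    rw [Finset.HasAntidiagonal.mem_antidiagonal] at hp
    simp only [Finset.mem_insert, Finset.mem_singleton] at hnp
    push_neg at hnp
    have h1 : 1 ≤ p.1 := by
      rcases Nat.eq_zero_or_pos p.1 with h | h
      · exfalso; exact hnp.1 (by rw [Prod.ext_iff]; omega)
      · exact h
    have h2 : p.1 < d := by
      rcases Nat.lt_or_ge p.1 d with h | h
      · exact h
      · exfalso; exact hnp.2 (by rw [Prod.ext_iff]; omega)
    rw [epF_coeff_lt _ h1 h2, zero_mul]
  have hne : ((0, d) : ℕ × ℕ) ≠ (d, 0) := by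
    intro h; rw [Prod.mk.injEq] at h; omega
  rw [Finset.sum_pair hne]
  simp only
  rw [epF_coeff_zero, epF_coeff_self _ hd, ← epP, epP_coeff_zero, one_mul, mul_one]

/-- The recursively defined exponents. -/
private noncomputable def epAux (a : ℕ → R) : ℕ → R
  | d => a d - (PowerSeries.coeff d) (∏ j ∈ (Finset.Icc 1 (d - 1)).attach,
      epF (epAux a j.1) j.1)
  termination_by d => d
  decreasing_by
    have := j.2
    rw [Finset.mem_Icc] at this
    omega

private lemma epAux_spec (a : ℕ → R) (d : ℕ) :
    epAux a d = a d - (PowerSeries.coeff d) (epP (epAux a) (d - 1)) := by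
  rw [epAux, epP, Finset.prod_attach (Finset.Icc 1 (d - 1)) (fun j => epF (epAux a j) j)]

private lemma epP_coeff_epAux (a : ℕ → R) {d N : ℕ} (ha : a 0 = 1) (hdN : d ≤ N) :
    (PowerSeries.coeff d) (epP (epAux a) N) = a d := by
  rcases Nat.eq_zero_or_pos d with rfl | hd
  · rw [epP_coeff_zero, ha]
  · rw [epP_coeff_stable _ hd hdN, epP_coeff_step _ hd, epAux_spec]
    ring

/-- Transfer products over `ℕ+` intervals to products over `ℕ` intervals. -/
private lemma pnat_prod_Icc {M : Type*} [CommMonoid M] (g : ℕ → M) (N : ℕ+) :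
    ∏ j ∈ Finset.Icc (1 : ℕ+) N, g (j : ℕ) = ∏ j ∈ Finset.Icc 1 (N : ℕ), g j := by
  refine Finset.prod_nbij (fun j => (j : ℕ)) ?_ ?_ ?_ ?_
  · intro j hj
    rw [Finset.mem_Icc] at hj ⊢
    exact ⟨j.one_le, by exact_mod_cast hj.2⟩
  · intro x _ y _ h
    exact PNat.coe_injective h
  · intro n hn
    rw [Finset.mem_coe, Finset.mem_Icc] at hn
    refine ⟨(⟨n, by omega⟩ : ℕ+), ?_, rfl⟩
    refine Finset.mem_coe.2 (Finset.mem_Icc.2 ?_)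
    constructor
    · exact PNat.one_le _
    · exact_mod_cast hn.2
  · intro j hj; rfl

end Aux

theorem combinatorial_euler_product_exists_unique
    {R : Type*} [CommRing R] [BinomialRing R] (a : ℕ → R) (ha : a 0 = 1) :
    ∃! b : ℕ+ → R, ∀ (d : ℕ) (N : ℕ+), d ≤ (N : ℕ) →
      PowerSeries.coeff d (∏ j ∈ Finset.Icc 1 N,
        PowerSeries.mk fun n =>
          if (j : ℕ) ∣ n then Ring.multichoose (b j) (n / (j : ℕ)) else 0) = a d := by
  -- reformulate products over ℕ+ as `epP` against the ℕ-indexed function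
  have key : ∀ (b : ℕ+ → R) (N : ℕ+),
      (∏ j ∈ Finset.Icc 1 N, PowerSeries.mk fun n =>
        if (j : ℕ) ∣ n then Ring.multichoose (b j) (n / (j : ℕ)) else 0) =
      epP (fun i => if h : 0 < i then b ⟨i, h⟩ else 0) (N : ℕ) := by
    intro b N
    rw [epP, ← pnat_prod_Icc (fun j => epF ((fun i => if h : 0 < i then b ⟨i, h⟩ else 0) j) j) N]
    refine Finset.prod_congr rfl fun j _ => ?_
    have hj : 0 < (j : ℕ) := j.pos
    simp only [epF, hj, dif_pos]
    congr 1
  refine ⟨fun j => epAux a (j : ℕ), ?_, ?_⟩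
  · intro d N hdN
    rw [key]
    have hc : epP (fun i => if h : 0 < i then epAux a ((⟨i, h⟩ : ℕ+) : ℕ) else 0) (N : ℕ) =
        epP (epAux a) (N : ℕ) :=
      epP_congr fun i hi _ => by simp [Nat.lt_of_lt_of_le Nat.zero_lt_one hi]
    exact (congrArg (PowerSeries.coeff d) hc).trans (epP_coeff_epAux a ha hdN)
  · intro b hb
    funext j
    -- strong induction on j
    suffices h : ∀ n : ℕ, ∀ j : ℕ+, (j : ℕ) = n → b j = epAux a (j : ℕ) by
      exact h (j : ℕ) j rfl
    intro n
    induction n using Nat.strong_induction_on with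
    | _ n ih =>
      intro j hj
      set c : ℕ → R := fun i => if h : 0 < i then b ⟨i, h⟩ else 0 with hc
      have hspec := hb (j : ℕ) j le_rfl
      rw [key] at hspec
      have hj1 : 1 ≤ (j : ℕ) := j.one_le
      rw [epP_coeff_step c hj1] at hspec
      have hsame : epP c ((j : ℕ) - 1) = epP (epAux a) ((j : ℕ) - 1) := by
        refine epP_congr fun i hi hi' => ?_
        have hipos : 0 < i := hi
        simp only [hc, hipos, dif_pos]
        exact ih i (by omega) ⟨i, hipos⟩ rfl
      have hcj : c (j : ℕ) = b j := by
        simp only [hc, j.pos, dif_pos]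
        exact congrArg b (Subtype.ext rfl)
      rw [hsame, hcj] at hspec
      rw [epAux_spec, ← hspec]
      ring
end
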